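/- arXiv:2408.11107 — 6 statements merged into one kernel-verified Lean document; each statement's English description precedes it below -/
import Mathlib

section
/- Let p be a prime and let C be a linear code of length n and dimension k over the field ℤ_p with minimum Hamming distance d. If the minimum Lee distance of C satisfies d_L(C) > ⌊μ_p·(n−k)⌋, then C is MDS, i.e. d = n−k+1. -/
/-- Lee weight of an element of `ZMod q`. -/
noncomputable def leeWt {q : ℕ} (a : ZMod q) : ℕ := min (ZMod.val a) (q - ZMod.val a)

/-- Lee weight of a vector over `ZMod q`. -/
noncomputable def leeWtVec {q n : ℕ} (x : Fin n → ZMod q) : ℕ := ∑ i, leeWt (x i)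

/-- Minimum Lee distance (= minimum Lee weight of a nonzero codeword) of a linear code. -/
noncomputable def minLee {q n : ℕ} (C : Submodule (ZMod q) (Fin n → ZMod q)) : ℕ :=
  sInf {w | ∃ x ∈ C, x ≠ 0 ∧ leeWtVec x = w}

/-- Minimum Hamming distance (= minimum Hamming weight of a nonzero codeword). -/
noncomputable def minHam {q n : ℕ} (C : Submodule (ZMod q) (Fin n → ZMod q)) : ℕ :=
  sInf {w | ∃ x ∈ C, x ≠ 0 ∧ hammingNorm x = w}

/-- Average nonzero Lee weight of `ZMod q`. -/
noncomputable def mu (q : ℕ) : ℚ :=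
  if Even q then (q : ℚ)^2 / (4 * ((q : ℚ) - 1)) else ((q : ℚ) + 1) / 4

/-- `Phi n k p`: the maximum minimum Lee distance over `k`-dimensional linear codes
of length `n` over `ZMod p`. -/
noncomputable def Phi (n k p : ℕ) : ℕ :=
  sSup {d | ∃ C : Submodule (ZMod p) (Fin n → ZMod p),
    Module.finrank (ZMod p) ↥C = k ∧ minLee C = d}

/-- Rank of a linear code over `ZMod q`: minimal number of generators. -/
noncomputable def codeRank {q n : ℕ} (C : Submodule (ZMod q) (Fin n → ZMod q)) : ℕ :=
  sInf {m | ∃ s : Finset (Fin n → ZMod q), s.card = m ∧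
    Submodule.span (ZMod q) (↑s : Set (Fin n → ZMod q)) = C}

/-- `PhiR n K q`: the maximum minimum Lee distance over rank-`K` linear codes of
length `n` over `ZMod q`. -/
noncomputable def PhiR (n K q : ℕ) : ℕ :=
  sSup {d | ∃ C : Submodule (ZMod q) (Fin n → ZMod q), codeRank C = K ∧ minLee C = d}

theorem sum_min_odd' (m : ℕ) : ∑ j ∈ Finset.range (2*m+1), min j (2*m+1 - j) = m*(m+1) := by
  have h : 2*m+1 = (m+1) + m := by ring
  rw [h, Finset.sum_range_add]
  have h1 : ∑ j ∈ Finset.range (m+1), min j ((m+1)+m - j) = ∑ j ∈ Finset.range (m+1), j := by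
    refine Finset.sum_congr rfl fun j hj => ?_
    simp only [Finset.mem_range] at hj; omega
  have h2 : ∑ j ∈ Finset.range m, min ((m+1)+j) ((m+1)+m - ((m+1)+j))
      = ∑ j ∈ Finset.range m, (m - j) := by
    refine Finset.sum_congr rfl fun j hj => ?_
    simp only [Finset.mem_range] at hj; omega
  have h3 : ∑ j ∈ Finset.range m, (m - j) = ∑ j ∈ Finset.range m, (j+1) := by
    rw [← Finset.sum_range_reflect]
    refine Finset.sum_congr rfl fun j hj => ?_
    simp only [Finset.mem_range] at hj; omega
  have g2 : ∑ j ∈ Finset.range m, (j+1) = (∑ j ∈ Finset.range m, j) + m := by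
    rw [Finset.sum_add_distrib]; simp
  rw [h1, h2, h3, g2, Finset.sum_range_succ]
  cases m with
  | zero => simp
  | succ m =>
    have g3' : (∑ j ∈ Finset.range (m+1), j) * 2 = (m+1) * m := Finset.sum_range_id_mul_two (m+1)
    nlinarith [g3']

theorem sum_leeWt_eq' (p : ℕ) [NeZero p] :
    ∑ a : ZMod p, leeWt a = ∑ j ∈ Finset.range p, min j (p - j) := by
  refine Finset.sum_nbij' (i := fun a => ZMod.val a) (j := fun j => (j : ZMod p)) ?_ ?_ ?_ ?_ ?_
  · intro a _; exact Finset.mem_range.mpr (ZMod.val_lt a)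
  · intro j _; exact Finset.mem_univ _
  · intro a _; simp [ZMod.natCast_val, ZMod.cast_id]
  · intro j hj; exact ZMod.val_cast_of_lt (Finset.mem_range.mp hj)
  · intro a _; rfl

theorem S_eq' (p : ℕ) (hp : p.Prime) [NeZero p] :
    ((∑ a : ZMod p, leeWt a : ℕ) : ℚ) = ((p:ℚ) - 1) * mu p := by
  rw [sum_leeWt_eq']
  rcases hp.eq_two_or_odd' with rfl | hodd
  · norm_num [mu, Finset.sum_range_succ]
  · obtain ⟨m, rfl⟩ := hodd
    rw [sum_min_odd', mu, if_neg (Nat.not_even_iff_odd.mpr ⟨m, by ring⟩)]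
    push_cast; ring

theorem lee_gt_implies_MDS (p n k d : ℕ) (hp : p.Prime)
    (C : Submodule (ZMod p) (Fin n → ZMod p)) (hC : C ≠ ⊥)
    (hdim : Module.finrank (ZMod p) ↥C = k)
    (hd : minHam C = d)
    (hL : (⌊mu p * ((n : ℚ) - (k : ℚ))⌋ : ℤ) < (minLee C : ℤ)) :
    (d : ℤ) = (n : ℤ) - (k : ℤ) + 1 := by
  haveI := Fact.mk hp
  haveI : NeZero p := ⟨hp.ne_zero⟩
  -- get a nonzero codeword of minimal Hamming weight
  obtain ⟨x, hxC, hx0⟩ := (Submodule.ne_bot_iff C).mp hC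
  obtain ⟨y, hyC, hy0, hyd⟩ : ∃ y ∈ C, y ≠ 0 ∧ hammingNorm y = d := by
    have hne : {w | ∃ z ∈ C, z ≠ 0 ∧ hammingNorm z = w}.Nonempty :=
      ⟨hammingNorm x, x, hxC, hx0, rfl⟩
    rw [← hd]; exact Nat.sInf_mem hne
  have hd_le : ∀ z ∈ C, z ≠ 0 → d ≤ hammingNorm z := fun z hz hz0 =>
    hd ▸ Nat.sInf_le ⟨z, hz, hz0, rfl⟩
  have hd1 : 1 ≤ d := by
    rcases Nat.eq_zero_or_pos d with h0 | h; · exact absurd (hammingNorm_eq_zero.mp (hyd.trans h0)) hy0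
    · exact h
  have hdn : d ≤ n := by
    rw [← hyd]
    calc hammingNorm y ≤ Fintype.card (Fin n) := by
          classical exact (Finset.card_filter_le _ _).trans (by simp)
      _ = n := by simp
  have hkn : k ≤ n := by
    rw [← hdim]
    calc Module.finrank (ZMod p) ↥C ≤ Module.finrank (ZMod p) (Fin n → ZMod p) :=
          Submodule.finrank_le C
      _ = n := by simp [Module.finrank_pi]
  -- averaging: (p-1) * minLee C ≤ d * (∑ a : ZMod p, leeWt a)
  have hsum : ∑ l : ZMod p, leeWtVec (l • y) = d * (∑ a : ZMod p, leeWt a) := by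
    unfold leeWtVec
    rw [Finset.sum_comm]
    have hterm : ∀ i : Fin n, ∑ l : ZMod p, leeWt ((l • y) i) = if y i ≠ 0 then (∑ a : ZMod p, leeWt a) else 0 := by
      intro i
      by_cases h : y i = 0
      · simp [h, leeWt]
      · rw [if_pos h]
        exact Fintype.sum_equiv (Equiv.mulRight₀ (y i) h) _ _ (fun l => rfl)
    rw [Finset.sum_congr rfl fun i _ => hterm i, Finset.sum_ite, Finset.sum_const,
      Finset.sum_const_zero, add_zero, smul_eq_mul, ← hyd]
    rfl
  have hlow : (p - 1) * minLee C ≤ ∑ l : ZMod p, leeWtVec (l • y) := by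
    have h0 : leeWtVec ((0 : ZMod p) • y) = 0 := by simp [leeWtVec, leeWt]
    rw [← Finset.add_sum_erase _ _ (Finset.mem_univ (0 : ZMod p)), h0, zero_add]
    have hcard : (Finset.univ.erase (0 : ZMod p)).card = p - 1 := by
      rw [Finset.card_erase_of_mem (Finset.mem_univ _), Finset.card_univ, ZMod.card]
    calc (p - 1) * minLee C = (Finset.univ.erase (0 : ZMod p)).card • minLee C := by
          rw [hcard, smul_eq_mul]
      _ ≤ ∑ l ∈ Finset.univ.erase (0 : ZMod p), leeWtVec (l • y) := by
          refine Finset.card_nsmul_le_sum _ _ _ fun l hl => ?_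
          have hl0 : l ≠ 0 := Finset.ne_of_mem_erase hl
          exact Nat.sInf_le ⟨l • y, C.smul_mem l hyC, smul_ne_zero hl0 hy0, rfl⟩
  have hkey : (p - 1) * minLee C ≤ d * (∑ a : ZMod p, leeWt a) := hsum ▸ hlow
  -- rational bound: minLee C ≤ d * mu p
  have hp1 : (1:ℚ) < (p:ℚ) := by exact_mod_cast hp.one_lt
  have hMd : (minLee C : ℚ) ≤ (d : ℚ) * mu p := by
    have hq : ((p:ℚ) - 1) * (minLee C : ℚ) ≤ (d : ℚ) * (((p:ℚ) - 1) * mu p) := by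
      rw [← S_eq' p hp]
      have h := (Nat.cast_le (α := ℚ)).mpr hkey
      push_cast [Nat.cast_sub hp.one_le] at h
      push_cast
      exact h
    have hq' : ((p:ℚ) - 1) * (minLee C : ℚ) ≤ ((p:ℚ) - 1) * ((d : ℚ) * mu p) := by
      rw [show ((p:ℚ) - 1) * ((d : ℚ) * mu p) = (d : ℚ) * (((p:ℚ) - 1) * mu p) by ring]
      exact hq
    exact le_of_mul_le_mul_left hq' (by linarith)
  have hmu0 : 0 ≤ mu p := by
    unfold mu
    split_ifs
    · apply div_nonneg (by positivity); linarith
    · positivity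
  -- lower bound: d + k > n
  have hgt : n < d + k := by
    by_contra hle
    push_neg at hle
    have hdk : (d : ℚ) ≤ (n : ℚ) - (k : ℚ) := by
      have := (Nat.cast_le (α := ℚ)).mpr hle
      push_cast at this; linarith
    have hM : (minLee C : ℚ) ≤ mu p * ((n:ℚ) - (k:ℚ)) := by
      calc (minLee C : ℚ) ≤ (d : ℚ) * mu p := hMd
        _ ≤ ((n:ℚ) - (k:ℚ)) * mu p := mul_le_mul_of_nonneg_right hdk hmu0
        _ = mu p * ((n:ℚ) - (k:ℚ)) := by ring
    have : (minLee C : ℤ) ≤ ⌊mu p * ((n:ℚ) - (k:ℚ))⌋ := Int.le_floor.mpr (by push_cast; exact hM)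
    omega
  -- Singleton bound: k + d ≤ n + 1
  have hsingleton : k + (d - 1) ≤ n := by
    obtain ⟨T, _, hTcard⟩ := Finset.exists_subset_card_eq
      (s := (Finset.univ : Finset (Fin n))) (n := d - 1) (by simp; omega)
    classical
    let f : ↥C →ₗ[ZMod p] (↥(Tᶜ) → ZMod p) :=
      (LinearMap.funLeft (ZMod p) (ZMod p) (fun i : ↥(Tᶜ) => (i : Fin n))).comp C.subtype
    have hinj : Function.Injective f := by
      rw [← LinearMap.ker_eq_bot, eq_bot_iff]
      intro z hz
      rw [LinearMap.mem_ker] at hz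
      rw [Submodule.mem_bot]
      by_contra hz0
      have hz0' : (z : Fin n → ZMod p) ≠ 0 := fun h => hz0 (Subtype.ext h)
      have hsupp : (Finset.univ.filter fun i => (z : Fin n → ZMod p) i ≠ 0) ⊆ T := by
        intro i hi
        simp only [Finset.mem_filter] at hi
        by_contra hiT
        have hic : i ∈ Tᶜ := Finset.mem_compl.mpr hiT
        have : (z : Fin n → ZMod p) i = 0 := congrFun hz ⟨i, hic⟩
        exact hi.2 this
      have h1 : hammingNorm (z : Fin n → ZMod p) ≤ d - 1 := by
        rw [← hTcard]
        exact Finset.card_le_card hsupp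
      have h2 : d ≤ hammingNorm (z : Fin n → ZMod p) := hd_le _ z.2 hz0'
      omega
    have hfr := LinearMap.finrank_le_finrank_of_injective hinj
    rw [hdim] at hfr
    have hfr2 : Module.finrank (ZMod p) (↥(Tᶜ) → ZMod p) = n - (d - 1) := by
      rw [Module.finrank_pi, Fintype.card_coe, Finset.card_compl, hTcard]
      simp
    rw [hfr2] at hfr
    omega
  omega
end

section
/- Let p be a prime, let C be a linear code of length n and dimension k over ℤ_p with minimum Hamming distance d, and let s be a positive integer. If d_L(C) > ⌊μ_p·(n−k−s)⌋, then d ≥ n−k−s+1; equivalently, the Singleton defect of C is at most s. -/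
/- ### Auxiliary lemmas -/

lemma odd_range_sum (m : ℕ) :
    ∑ j ∈ Finset.range (2*m+1), min j (2*m+1-j) = m*(m+1) := by
  have hsplit := Finset.sum_Ico_consecutive (fun j => min j (2*m+1-j))
    (Nat.zero_le (m+1)) (by omega : m+1 ≤ 2*m+1)
  rw [Finset.range_eq_Ico, ← hsplit]
  have h1 : ∑ j ∈ Finset.Ico 0 (m+1), min j (2*m+1-j) = ∑ j ∈ Finset.range (m+1), j := by
    rw [← Finset.range_eq_Ico]
    exact Finset.sum_congr rfl fun j hj => by
      simp only [Finset.mem_range] at hj; omega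
  have h2 : ∑ j ∈ Finset.Ico (m+1) (2*m+1), min j (2*m+1-j)
      = ∑ i ∈ Finset.range m, (m - i) := by
    rw [Finset.sum_Ico_eq_sum_range]
    refine Finset.sum_congr (by congr 1; omega) fun i hi => by
      simp only [Finset.mem_range] at hi; omega
  have h3 : ∑ i ∈ Finset.range m, (m - i) = ∑ i ∈ Finset.range m, (i+1) := by
    rw [← Finset.sum_range_reflect]
    exact Finset.sum_congr rfl fun i hi => by
      simp only [Finset.mem_range] at hi; omega
  rw [h1, h2, h3, Finset.sum_add_distrib, Finset.sum_const, Finset.card_range, smul_eq_mul,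
    mul_one]
  refine Nat.eq_of_mul_eq_mul_right (show 0 < 2 by norm_num) ?_
  rw [add_mul, add_mul, Finset.sum_range_id_mul_two, Finset.sum_range_id_mul_two]
  cases m with
  | zero => simp
  | succ m' => simp only [Nat.succ_sub_one]; ring

lemma sum_zmod_val (q : ℕ) [NeZero q] (f : ℕ → ℕ) :
    ∑ a : ZMod q, f a.val = ∑ j ∈ Finset.range q, f j := by
  refine Finset.sum_nbij' (fun a => ZMod.val a) (fun j => (j : ZMod q)) ?_ ?_ ?_ ?_ ?_ <;>
    simp +contextual [ZMod.val_lt, ZMod.val_cast_of_lt, Finset.mem_range, Nat.mod_eq_of_lt]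

lemma sum_lee (p : ℕ) [NeZero p] (hp : p.Prime) :
    ((∑ a : ZMod p, leeWt a : ℕ) : ℚ) = mu p * ((p : ℚ) - 1) := by
  have hs : ∑ a : ZMod p, leeWt a = ∑ j ∈ Finset.range p, min j (p - j) :=
    sum_zmod_val p (fun j => min j (p - j))
  rcases hp.eq_two_or_odd' with h2 | hodd
  · subst h2
    rw [hs]
    norm_num [mu, Finset.sum_range_succ]
  · obtain ⟨m, hm⟩ := hodd
    have hne : ¬ Even p := by rintro ⟨r, hr⟩; omega
    rw [hs, hm, odd_range_sum m, mu, if_neg (show ¬ Even (2*m+1) by rintro ⟨r, hr⟩; omega)]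
    push_cast
    field_simp
    ring

theorem lee_gt_implies_defect_le (p n k d s : ℕ) (hp : p.Prime) (hs : 0 < s)
    (C : Submodule (ZMod p) (Fin n → ZMod p)) (hC : C ≠ ⊥)
    (hdim : Module.finrank (ZMod p) ↥C = k)
    (hd : minHam C = d)
    (hL : (⌊mu p * ((n : ℚ) - (k : ℚ) - (s : ℚ))⌋ : ℤ) < (minLee C : ℤ)) :
    (n : ℤ) - (k : ℤ) - (s : ℤ) + 1 ≤ (d : ℤ) := by
  haveI := Fact.mk hp
  haveI : NeZero p := ⟨hp.ne_zero⟩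
  -- get a minimum Hamming weight codeword
  obtain ⟨x₀, hx₀C, hx₀⟩ := Submodule.ne_bot_iff C |>.mp hC
  have hne : {w | ∃ x ∈ C, x ≠ 0 ∧ hammingNorm x = w}.Nonempty :=
    ⟨hammingNorm x₀, x₀, hx₀C, hx₀, rfl⟩
  obtain ⟨x, hxC, hx0, hxw⟩ : ∃ x ∈ C, x ≠ 0 ∧ hammingNorm x = d := by
    have := Nat.sInf_mem hne
    rw [show sInf {w | ∃ x ∈ C, x ≠ 0 ∧ hammingNorm x = w} = d from hd] at this
    exact this
  set S : ℕ := ∑ a : ZMod p, leeWt a with hS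
  -- Step A : total Lee weight of the scalar multiples of x
  have stepA : ∑ c : ZMod p, leeWtVec (c • x) = d * S := by
    have : ∑ c : ZMod p, leeWtVec (c • x) = ∑ i, ∑ c : ZMod p, leeWt (c * x i) := by
      rw [Finset.sum_comm]
      simp [leeWtVec]
    rw [this]
    have hinner : ∀ i, ∑ c : ZMod p, leeWt (c * x i) = if x i ≠ 0 then S else 0 := by
      intro i
      by_cases h : x i = 0
      · simp [h, leeWt, ZMod.val_zero]
      · rw [if_pos h]
        exact Fintype.sum_bijective (· * x i)
          ((Finite.injective_iff_bijective).mp fun a b hab => mul_right_cancel₀ h hab)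
          _ _ (fun c => rfl)
    simp only [hinner]
    rw [Finset.sum_ite, Finset.sum_const, Finset.sum_const_zero, add_zero, smul_eq_mul, ← hxw]
    rfl
  -- Step B : lower bound by (p-1) * minLee C
  have stepB : (p - 1) * minLee C ≤ ∑ c : ZMod p, leeWtVec (c • x) := by
    have hsub : ∑ c ∈ Finset.univ.erase (0 : ZMod p), leeWtVec (c • x)
        ≤ ∑ c : ZMod p, leeWtVec (c • x) :=
      Finset.sum_le_sum_of_subset (Finset.erase_subset _ _)
    refine le_trans ?_ hsub
    have hcard : (Finset.univ.erase (0 : ZMod p)).card = p - 1 := by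
      rw [Finset.card_erase_of_mem (Finset.mem_univ _), Finset.card_univ, ZMod.card]
    calc (p - 1) * minLee C = ∑ _c ∈ Finset.univ.erase (0 : ZMod p), minLee C := by
            rw [Finset.sum_const, hcard, smul_eq_mul]
      _ ≤ ∑ c ∈ Finset.univ.erase (0 : ZMod p), leeWtVec (c • x) := by
            refine Finset.sum_le_sum fun c hc => ?_
            have hc0 : c ≠ 0 := Finset.ne_of_mem_erase hc
            exact Nat.sInf_le ⟨c • x, C.smul_mem c hxC, smul_ne_zero hc0 hx0, rfl⟩
  have key : (p - 1) * minLee C ≤ d * S := stepA ▸ stepB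
  -- Pass to ℚ
  have hp1 : (1 : ℕ) ≤ p := hp.one_lt.le
  have hpQ : (1 : ℚ) < (p : ℚ) := by exact_mod_cast hp.one_lt
  have keyQ : ((p : ℚ) - 1) * (minLee C : ℚ) ≤ (d : ℚ) * (mu p * ((p : ℚ) - 1)) := by
    rw [← sum_lee p hp]
    have := key
    have : ((p - 1) * minLee C : ℕ) ≤ ((d * S : ℕ)) := key
    push_cast [Nat.cast_sub hp1] at this ⊢
    exact_mod_cast this
  have hmin_le : (minLee C : ℚ) ≤ (d : ℚ) * mu p := by
    have hpos : (0 : ℚ) < (p : ℚ) - 1 := by linarith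
    nlinarith [keyQ]
  -- use hypothesis hL
  have hLQ : mu p * ((n : ℚ) - (k : ℚ) - (s : ℚ)) < (minLee C : ℚ) := by
    have := Int.floor_lt.mp hL
    exact_mod_cast this
  have hmu_pos : 0 < mu p := by
    rw [mu]
    split
    · have h4 : (0:ℚ) < 4 * ((p : ℚ) - 1) := by linarith
      positivity
    · positivity
  have hfin : (n : ℚ) - (k : ℚ) - (s : ℚ) < (d : ℚ) := by
    have : mu p * ((n : ℚ) - (k : ℚ) - (s : ℚ)) < mu p * (d : ℚ) := by
      calc mu p * ((n : ℚ) - (k : ℚ) - (s : ℚ)) < (minLee C : ℚ) := hLQ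
        _ ≤ (d : ℚ) * mu p := hmin_le
        _ = mu p * d := by ring
    exact lt_of_mul_lt_mul_left this hmu_pos.le
  have : ((n : ℤ) - (k : ℤ) - (s : ℤ) : ℤ) < (d : ℤ) := by
    have h := hfin
    have : (((n : ℤ) - k - s : ℤ) : ℚ) < ((d : ℤ) : ℚ) := by push_cast; push_cast at h; linarith
    exact_mod_cast this
  omega
end

section
/- Let p be a prime and let C be a linear code of length n and dimension k over ℤ_p with minimum Hamming distance d and Singleton defect s = n−k+1−d. Then d_L(C) ≤ ⌊μ_p·(n−k+1−s)⌋ = ⌊d·μ_p⌋. -/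
lemma sumMin (m : ℕ) :
    ∑ v ∈ Finset.range (2*m+1), min v (2*m+1 - v) = m*(m+1) := by
  induction m with
  | zero => decide
  | succ m ih =>
    have h1 : 2*(m+1)+1 = (2*m+2)+1 := by ring
    rw [h1, Finset.sum_range_succ']
    have h2 : ∀ i ∈ Finset.range (2*m+2), min (i+1) (2*m+2+1 - (i+1)) =
        min i (2*m+1 - i) + 1 := by
      intro i hi
      simp only [Finset.mem_range] at hi
      have : 2*m+2+1 - (i+1) = (2*m+1-i) + 1 := by omega
      rw [this]
      exact Nat.succ_min_succ i (2*m+1-i)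
    rw [Finset.sum_congr rfl h2, Finset.sum_add_distrib, Finset.sum_range_succ, ih]
    simp
    ring

lemma leeWt_zero {q : ℕ} : leeWt (0 : ZMod q) = 0 := by
  simp [leeWt]

lemma sum_leeWt (p : ℕ) [NeZero p] :
    ∑ b : ZMod p, leeWt b = ∑ v ∈ Finset.range p, min v (p - v) := by
  apply Finset.sum_nbij' (i := fun b => ZMod.val b) (j := fun v => (v : ZMod p))
  · intro a _; simp [Finset.mem_range, ZMod.val_lt]
  · intro a _; simp
  · intro a _; simp [ZMod.natCast_val, ZMod.cast_id]
  · intro v hv; simp only [Finset.mem_range] at hv; rw [ZMod.val_natCast_of_lt hv]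
  · intro a _; rfl

lemma sum_leeWt_mu (p : ℕ) [NeZero p] (hp : p.Prime) :
    ((∑ b : ZMod p, leeWt b : ℕ) : ℚ) = mu p * ((p:ℚ) - 1) := by
  rw [sum_leeWt]
  rcases eq_or_ne p 2 with rfl | hne
  · have h2 : ∑ v ∈ Finset.range 2, min v (2 - v) = 1 := by decide
    rw [h2]; norm_num [mu]
  · obtain ⟨m, hm⟩ := (hp.odd_of_ne_two hne)
    subst hm
    rw [sumMin]
    have : ¬ Even (2*m+1) := by simp [Nat.even_add_one, Nat.even_iff]
    rw [mu, if_neg this]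
    push_cast
    ring

lemma sum_units_leeWt (p : ℕ) [Fact p.Prime] (a : ZMod p) (ha : a ≠ 0) :
    ∑ u : (ZMod p)ˣ, leeWt ((u : ZMod p) * a) = ∑ b : ZMod p, leeWt b := by
  have h1 : ∑ u : (ZMod p)ˣ, leeWt ((u : ZMod p) * a) =
      ∑ u : (ZMod p)ˣ, leeWt (u : ZMod p) := by
    apply Fintype.sum_equiv (Equiv.mulRight (Units.mk0 a ha))
    intro u
    rfl
  rw [h1]
  have h2 : ∑ u : (ZMod p)ˣ, leeWt (u : ZMod p) =
      ∑ b : {b : ZMod p // b ≠ 0}, leeWt (b : ZMod p) := by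
    apply Fintype.sum_equiv unitsEquivNeZero
    intro u
    rfl
  rw [h2, ← Finset.sum_subtype (Finset.univ.filter (· ≠ 0)) (by simp) (fun b => leeWt b)]
  apply Finset.sum_subset (Finset.filter_subset _ _)
  intro b _ hb
  simp only [Finset.mem_filter, Finset.mem_univ, true_and, not_not] at hb
  simp [hb, leeWt_zero]

theorem lee_le_floor_d_mu (p n k d : ℕ) (s : ℕ) (hp : p.Prime)
    (C : Submodule (ZMod p) (Fin n → ZMod p)) (hC : C ≠ ⊥)
    (hdim : Module.finrank (ZMod p) ↥C = k)
    (hd : minHam C = d)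
    (hsdef : (s : ℤ) = (n : ℤ) - (k : ℤ) + 1 - (d : ℤ)) :
    (minLee C : ℤ) ≤ ⌊mu p * ((n : ℚ) - (k : ℚ) + 1 - (s : ℚ))⌋ ∧
      ⌊mu p * ((n : ℚ) - (k : ℚ) + 1 - (s : ℚ))⌋ = ⌊(d : ℚ) * mu p⌋ := by
  haveI : Fact p.Prime := ⟨hp⟩
  haveI : NeZero p := ⟨hp.ne_zero⟩
  have hq : (n : ℚ) - (k : ℚ) + 1 - (s : ℚ) = (d : ℚ) := by
    have h : (s : ℚ) = (n : ℚ) - (k : ℚ) + 1 - (d : ℚ) := by exact_mod_cast hsdef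
    linarith
  have hfl : mu p * ((n : ℚ) - (k : ℚ) + 1 - (s : ℚ)) = (d : ℚ) * mu p := by
    rw [hq]; ring
  refine ⟨?_, by rw [hfl]⟩
  rw [hfl, Int.le_floor]
  -- reduce to a rational inequality
  show ((minLee C : ℤ) : ℚ) ≤ (d : ℚ) * mu p
  push_cast
  -- a minimum-Hamming-weight codeword
  obtain ⟨x0, hx0C, hx0⟩ := (Submodule.ne_bot_iff C).mp hC
  have hne : {w | ∃ x ∈ C, x ≠ 0 ∧ hammingNorm x = w}.Nonempty :=
    ⟨hammingNorm x0, x0, hx0C, hx0, rfl⟩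
  obtain ⟨x, hxC, hx, hxd⟩ := Nat.sInf_mem hne
  rw [show sInf {w | ∃ x ∈ C, x ≠ 0 ∧ hammingNorm x = w} = minHam C from rfl, hd] at hxd
  set S := ∑ b : ZMod p, leeWt b with hSdef
  -- total Lee weight over all unit multiples of x
  have hT : ∑ u : (ZMod p)ˣ, leeWtVec ((u : ZMod p) • x) = d * S := by
    unfold leeWtVec
    rw [Finset.sum_comm]
    have hterm : ∀ i : Fin n, ∑ u : (ZMod p)ˣ, leeWt (((u : ZMod p) • x) i) =
        if x i ≠ 0 then S else 0 := by
      intro i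
      by_cases h : x i = 0
      · simp [h, leeWt_zero]
      · simp only [h, ne_eq, not_false_eq_true, if_true]
        calc ∑ u : (ZMod p)ˣ, leeWt (((u : ZMod p) • x) i)
            = ∑ u : (ZMod p)ˣ, leeWt ((u : ZMod p) * x i) := by
              simp [Pi.smul_apply, smul_eq_mul]
          _ = S := sum_units_leeWt p (x i) h
    rw [Finset.sum_congr rfl (fun i _ => hterm i), ← Finset.sum_filter,
      Finset.sum_const, show (Finset.univ.filter fun i => x i ≠ 0).card = hammingNorm x from rfl,
      hxd, smul_eq_mul]
  -- pick the unit multiple of minimum Lee weight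
  obtain ⟨u0, -, hu0⟩ := Finset.exists_min_image Finset.univ
    (fun u : (ZMod p)ˣ => leeWtVec ((u : ZMod p) • x)) ⟨1, Finset.mem_univ 1⟩
  have hmin : (p - 1) * leeWtVec ((u0 : ZMod p) • x) ≤ d * S := by
    have h1 : Finset.univ.card • leeWtVec ((u0 : ZMod p) • x) ≤
        ∑ u : (ZMod p)ˣ, leeWtVec ((u : ZMod p) • x) :=
      Finset.card_nsmul_le_sum Finset.univ _ _ (fun u hu => hu0 u hu)
    rw [Finset.card_univ, ZMod.card_units p, smul_eq_mul, hT] at h1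
    exact h1
  -- min Lee distance is at most this codeword's Lee weight
  have hmem : minLee C ≤ leeWtVec ((u0 : ZMod p) • x) :=
    Nat.sInf_le ⟨(u0 : ZMod p) • x, Submodule.smul_mem C _ hxC,
      smul_ne_zero (Units.ne_zero u0) hx, rfl⟩
  -- put it together over ℚ
  have hS : (S : ℚ) = mu p * ((p : ℚ) - 1) := sum_leeWt_mu p hp
  have hp2 : (2 : ℚ) ≤ (p : ℚ) := by exact_mod_cast hp.two_le
  have hpos : (0 : ℚ) < (p : ℚ) - 1 := by linarith
  have hc : ((p : ℚ) - 1) * (leeWtVec ((u0 : ZMod p) • x) : ℚ) ≤ (d : ℚ) * (S : ℚ) := by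
    have := hmin
    have hcast : ((p - 1 : ℕ) : ℚ) = (p : ℚ) - 1 := by
      rw [Nat.cast_sub hp.one_le]; norm_num
    calc ((p : ℚ) - 1) * (leeWtVec ((u0 : ZMod p) • x) : ℚ)
        = (((p - 1) * leeWtVec ((u0 : ZMod p) • x) : ℕ) : ℚ) := by push_cast [hcast]; ring
      _ ≤ ((d * S : ℕ) : ℚ) := by exact_mod_cast hmin
      _ = (d : ℚ) * (S : ℚ) := by push_cast; ring
  have hle : (leeWtVec ((u0 : ZMod p) • x) : ℚ) ≤ (d : ℚ) * mu p := by
    rw [hS] at hc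
    have h2 : ((p : ℚ) - 1) * (leeWtVec ((u0 : ZMod p) • x) : ℚ) ≤
        ((p : ℚ) - 1) * ((d : ℚ) * mu p) := by linarith [hc]
    exact le_of_mul_le_mul_left h2 hpos
  calc (minLee C : ℚ) ≤ (leeWtVec ((u0 : ZMod p) • x) : ℚ) := by exact_mod_cast hmem
    _ ≤ (d : ℚ) * mu p := hle
end

section
/- Let p be a prime and let k ≥ 1 be an integer. If p ∈ {2,3}, or if 2k ≥ p−1, then Φ(k+1,k,p) = 2; that is, the maximum possible minimum Lee distance of a k-dimensional linear code of length k+1 over ℤ_p equals 2. -/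
lemma leeWt_eq_zero_iff {q : ℕ} [NeZero q] (a : ZMod q) : leeWt a = 0 ↔ a = 0 := by
  have h := ZMod.val_lt a
  constructor
  · intro h0
    have : a.val = 0 := by unfold leeWt at h0; omega
    exact (ZMod.val_eq_zero a).mp this
  · rintro rfl; simp [leeWt]

lemma leeWt_one {q : ℕ} (hq : 2 ≤ q) : leeWt (1 : ZMod q) = 1 := by
  haveI : NeZero q := ⟨by omega⟩
  have : (1 : ZMod q).val = 1 := ZMod.val_one_eq_one_mod q ▸ Nat.mod_eq_of_lt hq
  simp [leeWt, this]
  omega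

lemma leeWt_neg {q : ℕ} [NeZero q] (a : ZMod q) : leeWt (-a) = leeWt a := by
  rcases eq_or_ne a 0 with rfl | ha
  · simp
  · have h := ZMod.val_lt a
    have h0 : a.val ≠ 0 := fun h' => ha ((ZMod.val_eq_zero a).mp h')
    rw [leeWt, leeWt, ZMod.neg_val, if_neg ha]
    omega

lemma eq_or_eq_neg_of_leeWt_eq {q : ℕ} [NeZero q] {a b : ZMod q}
    (h : leeWt a = leeWt b) : a = b ∨ a = -b := by
  rcases eq_or_ne a 0 with rfl | ha
  · left
    have : leeWt b = 0 := by rw [← h, leeWt_zero]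
    rw [(leeWt_eq_zero_iff b).mp this]
  rcases eq_or_ne b 0 with rfl | hb
  · rw [leeWt_zero] at h
    exact absurd ((leeWt_eq_zero_iff a).mp h) ha
  have hva := ZMod.val_lt a
  have hvb := ZMod.val_lt b
  have hna : (-a).val = q - a.val := by rw [ZMod.neg_val, if_neg ha]
  have hnb : (-b).val = q - b.val := by rw [ZMod.neg_val, if_neg hb]
  have hinj : Function.Injective (ZMod.val : ZMod q → ℕ) := ZMod.val_injective q
  have ha' : leeWt a = a.val ∨ leeWt a = (-a).val := by rw [hna]; exact min_choice _ _
  have hb' : leeWt b = b.val ∨ leeWt b = (-b).val := by rw [hnb]; exact min_choice _ _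
  rcases ha' with ha' | ha' <;> rcases hb' with hb' | hb'
  · left; exact hinj (by omega)
  · right; exact hinj (by omega)
  · right
    have : -a = b := hinj (by omega)
    rw [← this, neg_neg]
  · left; exact neg_injective (hinj (by omega))

lemma sum_leeWt_single {q n : ℕ} (i : Fin n) (a : ZMod q) :
    ∑ l, leeWt ((Pi.single i a : Fin n → ZMod q) l) = leeWt a := by
  rw [Finset.sum_eq_single i]
  · simp
  · intro l _ hl; rw [Pi.single_eq_of_ne hl, leeWt_zero]
  · simp

lemma leeWtVec_single_add_single {q n : ℕ} {i j : Fin n} (hij : i ≠ j) (a b : ZMod q) :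
    leeWtVec ((Pi.single i a + Pi.single j b : Fin n → ZMod q)) = leeWt a + leeWt b := by
  unfold leeWtVec
  have key : ∀ l, leeWt ((Pi.single i a + Pi.single j b : Fin n → ZMod q) l)
      = leeWt ((Pi.single i a : Fin n → ZMod q) l)
        + leeWt ((Pi.single j b : Fin n → ZMod q) l) := by
    intro l
    rcases eq_or_ne l i with rfl | hli
    · simp [Pi.single_eq_of_ne hij, leeWt_zero]
    rcases eq_or_ne l j with rfl | hlj
    · simp [Pi.single_eq_of_ne hij.symm, leeWt_zero]
    · simp [Pi.single_eq_of_ne hli, Pi.single_eq_of_ne hlj, leeWt_zero]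
  simp_rw [key]
  rw [Finset.sum_add_distrib, sum_leeWt_single, sum_leeWt_single]

lemma leeWtVec_single {q n : ℕ} (i : Fin n) (a : ZMod q) :
    leeWtVec (Pi.single i a) = leeWt a := sum_leeWt_single i a

lemma minLee_le_two (p k : ℕ) [Fact p.Prime] (hk : 1 ≤ k) (hpk : p - 1 ≤ 2 * k)
    (C : Submodule (ZMod p) (Fin (k + 1) → ZMod p))
    (hC : Module.finrank (ZMod p) ↥C = k) : minLee C ≤ 2 := by
  have hp2 : 2 ≤ p := (Fact.out : p.Prime).two_le
  haveI : NeZero p := ⟨by omega⟩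
  -- a linear functional with kernel C
  have hpi : Module.finrank (ZMod p) (Fin (k + 1) → ZMod p) = k + 1 := by
    rw [Module.finrank_pi]; simp
  have hfr : Module.finrank (ZMod p) ((Fin (k + 1) → ZMod p) ⧸ C) = 1 := by
    have := Submodule.finrank_quotient_add_finrank C
    rw [hC, hpi] at this
    omega
  obtain ⟨φ⟩ : Nonempty (((Fin (k + 1) → ZMod p) ⧸ C) ≃ₗ[ZMod p] ZMod p) := by
    apply FiniteDimensional.nonempty_linearEquiv_of_finrank_eq
    rw [hfr, Module.finrank_self]
  set ψ : (Fin (k + 1) → ZMod p) →ₗ[ZMod p] ZMod p := φ.toLinearMap ∘ₗ C.mkQ with hψ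
  have hker : ∀ x, ψ x = 0 ↔ x ∈ C := by
    intro x
    rw [hψ, LinearMap.comp_apply]
    rw [show φ.toLinearMap (C.mkQ x) = φ (C.mkQ x) from rfl, LinearEquiv.map_eq_zero_iff,
      Submodule.mkQ_apply, Submodule.Quotient.mk_eq_zero]
  set h : Fin (k + 1) → ZMod p := fun i => ψ (Pi.single i 1) with hdef
  have hpsi_single : ∀ (i : Fin (k + 1)) (a : ZMod p), ψ (Pi.single i a) = a * h i := by
    intro i a
    have : (Pi.single i a : Fin (k + 1) → ZMod p) = a • (Pi.single i (1 : ZMod p) : Fin (k + 1) → ZMod p) := by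
      rw [← Pi.single_smul, smul_eq_mul, mul_one]
    rw [this, map_smul, smul_eq_mul, hdef]
  -- helper to conclude
  have conclude : ∀ x : Fin (k + 1) → ZMod p, x ∈ C → x ≠ 0 → leeWtVec x ≤ 2 → minLee C ≤ 2 := by
    intro x hx hx0 hw
    exact le_trans (Nat.sInf_le ⟨x, hx, hx0, rfl⟩) hw
  by_cases hz : ∃ i, h i = 0
  · obtain ⟨i, hi⟩ := hz
    refine conclude (Pi.single i 1) ?_ ?_ ?_
    · rw [← hker, hpsi_single, hi, mul_zero]
    · intro h0
      have := congrFun h0 i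
      simp at this
    · rw [leeWtVec_single, leeWt_one hp2]; omega
  · push_neg at hz
    -- pigeonhole on leeWt (h i)
    have hk2 : p / 2 < k + 1 := by omega
    have maps : ∀ i ∈ (Finset.univ : Finset (Fin (k + 1))),
        leeWt (h i) ∈ Finset.Icc 1 (p / 2) := by
      intro i _
      have h1 : leeWt (h i) ≠ 0 := fun hh => hz i ((leeWt_eq_zero_iff _).mp hh)
      have h2 : leeWt (h i) ≤ p / 2 := by
        have := ZMod.val_lt (h i)
        unfold leeWt; omega
      rw [Finset.mem_Icc]; omega
    have hcard : (Finset.Icc 1 (p / 2)).card < (Finset.univ : Finset (Fin (k + 1))).card := by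
      rw [Nat.card_Icc, Finset.card_univ, Fintype.card_fin]; omega
    obtain ⟨i, -, j, -, hij, heq⟩ :=
      Finset.exists_ne_map_eq_of_card_lt_of_maps_to hcard maps
    rcases eq_or_eq_neg_of_leeWt_eq heq with hsame | hopp
    · refine conclude (Pi.single i 1 + Pi.single j (-1)) ?_ ?_ ?_
      · rw [← hker, map_add, hpsi_single, hpsi_single, one_mul, hsame]
        ring
      · intro h0
        have := congrFun h0 i
        simp [Pi.single_eq_of_ne hij] at this
      · rw [leeWtVec_single_add_single hij, leeWt_one hp2, leeWt_neg, leeWt_one hp2]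
    · refine conclude (Pi.single i 1 + Pi.single j 1) ?_ ?_ ?_
      · rw [← hker, map_add, hpsi_single, hpsi_single, one_mul, one_mul, hopp]
        ring
      · intro h0
        have := congrFun h0 i
        simp [Pi.single_eq_of_ne hij] at this
      · rw [leeWtVec_single_add_single hij, leeWt_one hp2]

lemma exists_good_code (p k : ℕ) [Fact p.Prime] (hk : 1 ≤ k) :
    ∃ C : Submodule (ZMod p) (Fin (k + 1) → ZMod p),
      Module.finrank (ZMod p) ↥C = k ∧ minLee C = 2 := by
  have hp2 : 2 ≤ p := (Fact.out : p.Prime).two_le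
  haveI : NeZero p := ⟨by omega⟩
  have h01 : (0 : Fin (k + 1)) ≠ 1 := by
    intro he
    have := congrArg Fin.val he
    rw [Fin.val_zero, Fin.val_one'] at this
    rw [Nat.mod_eq_of_lt (by omega)] at this
    omega
  let f : (Fin (k + 1) → ZMod p) →ₗ[ZMod p] ZMod p :=
    { toFun := fun x => ∑ i, x i
      map_add' := fun x y => by simp [Finset.sum_add_distrib]
      map_smul' := fun c x => by simp [Finset.mul_sum] }
  have hf : ∀ x, f x = ∑ i, x i := fun _ => rfl
  have hmem : (Pi.single 0 1 + Pi.single 1 (-1) : Fin (k + 1) → ZMod p) ∈ LinearMap.ker f := by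
    rw [LinearMap.mem_ker, hf]
    simp [Finset.sum_add_distrib, Finset.sum_pi_single']
  have hne : (Pi.single 0 1 + Pi.single 1 (-1) : Fin (k + 1) → ZMod p) ≠ 0 := by
    intro h0
    have := congrFun h0 0
    simp [Pi.single_eq_of_ne h01] at this
  have hwt : leeWtVec (Pi.single 0 1 + Pi.single 1 (-1) : Fin (k + 1) → ZMod p) = 2 := by
    rw [leeWtVec_single_add_single h01, leeWt_one hp2, leeWt_neg, leeWt_one hp2]
  refine ⟨LinearMap.ker f, ?_, ?_⟩
  · have hsurj : Function.Surjective f := by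
      intro c
      refine ⟨Pi.single 0 c, ?_⟩
      rw [hf]
      simp [Finset.sum_pi_single']
    have hrk := LinearMap.finrank_range_add_finrank_ker f
    rw [LinearMap.range_eq_top.mpr hsurj, finrank_top, Module.finrank_self,
      Module.finrank_pi] at hrk
    simp at hrk
    omega
  · apply le_antisymm
    · exact Nat.sInf_le ⟨_, hmem, hne, hwt⟩
    · refine le_csInf ⟨2, _, hmem, hne, hwt⟩ ?_
      rintro w ⟨x, hx, hx0, rfl⟩
      obtain ⟨i, hi⟩ : ∃ i, x i ≠ 0 := by
        by_contra hc; push_neg at hc; exact hx0 (funext hc)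
      obtain ⟨j, hji, hj⟩ : ∃ j, j ≠ i ∧ x j ≠ 0 := by
        by_contra hc; push_neg at hc
        have hsum : ∑ l, x l = x i :=
          Finset.sum_eq_single i (fun l _ hl => hc l hl) (by simp)
        rw [LinearMap.mem_ker, hf, hsum] at hx
        exact hi hx
      have h1 : 1 ≤ leeWt (x i) :=
        Nat.one_le_iff_ne_zero.mpr (fun hh => hi ((leeWt_eq_zero_iff _).mp hh))
      have h2 : 1 ≤ leeWt (x j) :=
        Nat.one_le_iff_ne_zero.mpr (fun hh => hj ((leeWt_eq_zero_iff _).mp hh))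
      have hle : leeWt (x j) + leeWt (x i) ≤ leeWtVec x := by
        have hp : leeWt (x j) + leeWt (x i)
            = ∑ l ∈ ({j, i} : Finset (Fin (k + 1))), leeWt (x l) :=
          (Finset.sum_pair (f := fun l => leeWt (x l)) hji).symm
        rw [hp]
        unfold leeWtVec
        exact Finset.sum_le_sum_of_subset (Finset.subset_univ _)
      omega

theorem phi_kp1_k_eq_two (p k : ℕ) (hp : p.Prime) (hk : 1 ≤ k)
    (h : p = 2 ∨ p = 3 ∨ p - 1 ≤ 2 * k) :
    Phi (k + 1) k p = 2 := by
  haveI : Fact p.Prime := ⟨hp⟩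
  have hpk : p - 1 ≤ 2 * k := by rcases h with rfl | rfl | h <;> omega
  obtain ⟨C, hC, hm⟩ := exists_good_code p k hk
  have hub : ∀ d ∈ {d | ∃ C : Submodule (ZMod p) (Fin (k + 1) → ZMod p),
      Module.finrank (ZMod p) ↥C = k ∧ minLee C = d}, d ≤ 2 := by
    rintro d ⟨D, hD, rfl⟩
    exact minLee_le_two p k hk hpk D hD
  apply le_antisymm
  · exact csSup_le ⟨2, C, hC, hm⟩ hub
  · exact le_csSup ⟨2, hub⟩ ⟨C, hC, hm⟩
end

section
/- Let p be a prime and t ≥ 1, n ≥ K ≥ 1 integers. Then Φ(n,K,p^t) ≤ p^{t−1}·Φ(n,K,p); that is, the maximum minimum Lee distance over rank-K linear codes of length n over ℤ_{p^t} is at most p^{t−1} times the maximum minimum Lee distance over K-dimensional linear codes of length n over ℤ_p. -/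
/-!
Let `C ≤ (ℤ/p^(s+1))^n` and let `T = {v ∈ 𝔽_p^n | p^s v ∈ C}` be its torsion code. Multiplication
by `p^s` maps `T` injectively into `C` and multiplies Lee weights by `p^s`, so
`d_L(C) ≤ p^s d_L(D)` for every nonzero subspace `D ≤ T`. It remains to find such a `D` of
dimension `rank C`, i.e. to show `rank C ≤ dim T`. Since `p` is nilpotent, Nakayama's lemma lifts
any `𝔽_p`-basis of `C/pC` to a generating set of `C`, so `rank C ≤ dim C/pC`; and
`|C/pC| = |ker (p : C → C)| = |T|`.
-/

open Module Submodule

section LeeWeight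

variable {q n : ℕ}

lemma leeWtVec_le (x : Fin n → ZMod q) : leeWtVec x ≤ n * q :=
  calc leeWtVec x ≤ ∑ _i : Fin n, q :=
        Finset.sum_le_sum fun _ _ => (min_le_right _ _).trans (Nat.sub_le _ _)
    _ = n * q := by simp

lemma minLee_le_leeWtVec {C : Submodule (ZMod q) (Fin n → ZMod q)} {x : Fin n → ZMod q}
    (hx : x ∈ C) (hx0 : x ≠ 0) : minLee C ≤ leeWtVec x :=
  Nat.sInf_le ⟨x, hx, hx0, rfl⟩

lemma exists_leeWtVec_eq_minLee {C : Submodule (ZMod q) (Fin n → ZMod q)} (hC : C ≠ ⊥) :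
    ∃ x ∈ C, x ≠ 0 ∧ leeWtVec x = minLee C := by
  obtain ⟨x, hx, hx0⟩ := (Submodule.ne_bot_iff C).mp hC
  exact Nat.sInf_mem (s := {w | ∃ x ∈ C, x ≠ 0 ∧ leeWtVec x = w}) ⟨_, x, hx, hx0, rfl⟩

lemma minLee_le (C : Submodule (ZMod q) (Fin n → ZMod q)) : minLee C ≤ n * q := by
  rcases eq_or_ne C ⊥ with rfl | hC
  · simp [minLee]
  · obtain ⟨x, -, -, hx⟩ := exists_leeWtVec_eq_minLee hC
    exact hx ▸ leeWtVec_le x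

lemma minLee_le_Phi (C : Submodule (ZMod q) (Fin n → ZMod q)) :
    minLee C ≤ Phi n (finrank (ZMod q) C) q :=
  le_csSup ⟨n * q, by rintro _ ⟨D, -, rfl⟩; exact minLee_le D⟩ ⟨C, rfl, rfl⟩

end LeeWeight

lemma Submodule.exists_le_finrank_eq {K V : Type*} [DivisionRing K] [AddCommGroup V]
    [Module K V] {T : Submodule K V} [FiniteDimensional K T] {k : ℕ} (hk : k ≤ finrank K T) :
    ∃ D ≤ T, finrank K D = k := by
  obtain ⟨f, hf⟩ := exists_linearIndependent_of_le_finrank hk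
  refine ⟨span K (Set.range (T.subtype ∘ f)), span_le.mpr ?_, ?_⟩
  · rintro _ ⟨i, rfl⟩
    exact (f i).2
  · rw [finrank_span_eq_card (hf.map' _ T.ker_subtype), Fintype.card_fin]

namespace ModN

instance {G : Type*} [AddCommGroup G] [Finite G] (n : ℕ) : Finite (ModN G n) :=
  Quotient.finite _

lemma natCard_eq_natCard_ker {G : Type*} [AddCommGroup G] [Finite G] (n : ℕ) :
    Nat.card (ModN G n) = Nat.card (LinearMap.ker (LinearMap.lsmul ℤ G n)) :=
  AddSubgroup.index_range (f := (LinearMap.lsmul ℤ G n).toAddMonoidHom)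

lemma span_range_eq_top_of_span_mkQ_eq_top {R M : Type*} [CommRing R] [AddCommGroup M]
    [Module R M] [Module.Finite R M] {p : ℕ} (hp : IsNilpotent (p : R)) {ι : Type*}
    (c : ι → M) (hc : span (ZMod p) (Set.range (ModN.mkQ p ∘ c)) = ⊤) :
    span R (Set.range c) = ⊤ := by
  have hI : Ideal.span {(p : R)} ≤ (⊥ : Ideal R).jacobson := by
    rw [Ideal.span_singleton_le_iff_mem]
    exact Ideal.radical_le_jacobson (mem_nilradical.mpr hp)
  refine top_le_iff.mp (le_of_le_smul_of_le_jacobson_bot Module.Finite.fg_top hI ?_)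
  rw [Submodule.ideal_span_singleton_smul]
  intro x _
  -- The image of an additive subgroup in `ModN M p` is automatically a `ZMod p`-submodule.
  let S : Submodule (ZMod p) (ModN M p) :=
    AddSubgroup.toZModSubmodule p ((span R (Set.range c)).toAddSubgroup.map (ModN.mkQ p))
  have hS : span (ZMod p) (Set.range (ModN.mkQ p ∘ c)) ≤ S :=
    span_le.mpr (by rintro _ ⟨i, rfl⟩; exact ⟨c i, subset_span ⟨i, rfl⟩, rfl⟩)
  obtain ⟨y, hy, hyx⟩ := (hc ▸ hS) (mem_top : ModN.mkQ p x ∈ ⊤)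
  obtain ⟨z, hz⟩ : x - y ∈ LinearMap.range (LinearMap.lsmul ℤ M p) :=
    (Submodule.Quotient.eq _).mp hyx.symm
  have hx : x = y + (p : R) • z := by
    rw [Nat.cast_smul_eq_nsmul, ← natCast_zsmul]
    simp only [LinearMap.lsmul_apply] at hz
    rw [hz]
    abel
  rw [hx]
  exact add_mem_sup hy (smul_mem_pointwise_smul _ _ _ mem_top)

end ModN

section MulPow

variable (m s : ℕ)

noncomputable def mulPowHom : ZMod m →+ ZMod (m ^ (s + 1)) :=
  ZMod.lift m ⟨(AddMonoidHom.mulLeft ((m ^ s : ℕ) : ZMod (m ^ (s + 1)))).comp (Int.castAddHom _),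
    by simp only [AddMonoidHom.coe_comp, Function.comp_apply, Int.coe_castAddHom, Int.cast_natCast,
      AddMonoidHom.coe_mulLeft, ← Nat.cast_mul, ← pow_succ, ZMod.natCast_self]⟩

variable {m s} [NeZero m]

lemma mulPowHom_apply (a : ZMod m) :
    mulPowHom m s a = ((m ^ s * a.val : ℕ) : ZMod (m ^ (s + 1))) := by
  have ha : a = ((a.val : ℤ) : ZMod m) := by simp
  rw [ha, mulPowHom, ZMod.lift_coe]
  simp

lemma val_mulPowHom (a : ZMod m) : (mulPowHom m s a).val = m ^ s * a.val := by
  have hlt : m ^ s * a.val < m ^ (s + 1) := by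
    rw [pow_succ]
    exact Nat.mul_lt_mul_of_pos_left a.val_lt (pow_pos (NeZero.pos m) s)
  rw [mulPowHom_apply, ZMod.val_cast_of_lt hlt]

lemma mulPowHom_injective : Function.Injective (mulPowHom m s) := by
  intro a b h
  have := congrArg ZMod.val h
  rw [val_mulPowHom, val_mulPowHom] at this
  exact ZMod.val_injective m (Nat.eq_of_mul_eq_mul_left (pow_pos (NeZero.pos m) s) this)

lemma leeWt_mulPowHom (a : ZMod m) : leeWt (mulPowHom m s a) = m ^ s * leeWt a := by
  rw [leeWt, leeWt, val_mulPowHom, pow_succ, ← Nat.mul_sub, Nat.mul_min_mul_left]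

lemma exists_mulPowHom_eq_iff (w : ZMod (m ^ (s + 1))) :
    (∃ a, mulPowHom m s a = w) ↔ m • w = 0 := by
  constructor
  · rintro ⟨a, rfl⟩
    rw [mulPowHom_apply, nsmul_eq_mul, ← Nat.cast_mul, ← mul_assoc, ← pow_succ', Nat.cast_mul,
      ZMod.natCast_self, zero_mul]
  · intro h
    have hdvd : m * m ^ s ∣ m * w.val := by
      rw [← pow_succ', ← ZMod.natCast_eq_zero_iff, Nat.cast_mul, ZMod.natCast_zmod_val,
        ← nsmul_eq_mul, h]
    obtain ⟨k, hk⟩ := Nat.dvd_of_mul_dvd_mul_left (NeZero.pos m) hdvd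
    have hkm : k < m := by
      have := w.val_lt
      rw [hk, pow_succ] at this
      exact Nat.lt_of_mul_lt_mul_left this
    refine ⟨k, ?_⟩
    rw [mulPowHom_apply, ZMod.val_cast_of_lt hkm, ← hk, ZMod.natCast_zmod_val]

end MulPow

section TorsionCode

variable {m s n : ℕ}

noncomputable def torsionCode (C : Submodule (ZMod (m ^ (s + 1))) (Fin n → ZMod (m ^ (s + 1)))) :
    Submodule (ZMod m) (Fin n → ZMod m) :=
  AddSubgroup.toZModSubmodule m (C.toAddSubgroup.comap ((mulPowHom m s).compLeft (Fin n)))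

variable {C : Submodule (ZMod (m ^ (s + 1))) (Fin n → ZMod (m ^ (s + 1)))}

lemma mem_torsionCode {v : Fin n → ZMod m} :
    v ∈ torsionCode C ↔ (fun i => mulPowHom m s (v i)) ∈ C := Iff.rfl

lemma natCard_torsionCode [NeZero m] :
    Nat.card (torsionCode C) = Nat.card (LinearMap.ker (LinearMap.lsmul ℤ C m)) := by
  have mem_ker {w : C} : w ∈ LinearMap.ker (LinearMap.lsmul ℤ C m) ↔
      ∀ i, m • (w : Fin n → ZMod (m ^ (s + 1))) i = 0 := by
    simp [Subtype.ext_iff, funext_iff, natCast_zsmul]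
  refine Nat.card_congr (Equiv.ofBijective
    (fun v => ⟨⟨fun i => mulPowHom m s ((v : Fin n → ZMod m) i), v.2⟩,
      mem_ker.mpr fun i => (exists_mulPowHom_eq_iff _).mp ⟨_, rfl⟩⟩) ⟨?_, ?_⟩)
  · intro v w h
    ext i
    exact mulPowHom_injective (congrFun (congrArg Subtype.val (congrArg Subtype.val h)) i)
  · rintro ⟨⟨w, hw⟩, hker⟩
    choose a ha using fun i => (exists_mulPowHom_eq_iff (w i)).mpr (mem_ker.mp hker i)
    have hwa : (fun i => mulPowHom m s (a i)) = w := funext ha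
    exact ⟨⟨a, mem_torsionCode.mpr (hwa ▸ hw)⟩, by simp [hwa]⟩

lemma minLee_le_pow_mul_minLee [NeZero m] {D : Submodule (ZMod m) (Fin n → ZMod m)}
    (hD : D ≤ torsionCode C) (hD0 : D ≠ ⊥) : minLee C ≤ m ^ s * minLee D := by
  obtain ⟨v, hvD, hv0, hv⟩ := exists_leeWtVec_eq_minLee hD0
  have hne : (fun i => mulPowHom m s (v i)) ≠ 0 := fun h =>
    hv0 (funext fun i => mulPowHom_injective (by simpa using congrFun h i))
  calc minLee C ≤ leeWtVec (fun i => mulPowHom m s (v i)) := minLee_le_leeWtVec (hD hvD) hne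
    _ = m ^ s * minLee D := by
      simp only [← hv, leeWtVec, leeWt_mulPowHom, Finset.mul_sum]

end TorsionCode

section CodeRank

variable {p s n : ℕ}

lemma codeRank_le_card {q : ℕ} {C : Submodule (ZMod q) (Fin n → ZMod q)}
    (S : Finset (Fin n → ZMod q)) (hS : span (ZMod q) (S : Set (Fin n → ZMod q)) = C) :
    codeRank C ≤ S.card :=
  Nat.sInf_le ⟨S, rfl, hS⟩

variable [Fact p.Prime] (C : Submodule (ZMod (p ^ (s + 1))) (Fin n → ZMod (p ^ (s + 1))))

lemma codeRank_le_finrank_modN : codeRank C ≤ finrank (ZMod p) (ModN C p) := by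
  have hp : IsNilpotent (p : ZMod (p ^ (s + 1))) :=
    ⟨s + 1, by rw [← Nat.cast_pow, ZMod.natCast_self]⟩
  let b := Module.finBasis (ZMod p) (ModN C p)
  choose c hc using fun i => Submodule.mkQ_surjective _ (b i)
  have hspan : span (ZMod (p ^ (s + 1))) (Set.range c) = ⊤ := by
    refine ModN.span_range_eq_top_of_span_mkQ_eq_top hp c ?_
    rw [← b.span_eq]
    exact congrArg _ (congrArg Set.range (funext hc))
  calc codeRank C ≤ (Finset.univ.image fun i => (c i : Fin n → ZMod (p ^ (s + 1)))).card := by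
        refine codeRank_le_card _ ?_
        rw [Finset.coe_image, Finset.coe_univ, Set.image_univ, Set.range_comp']
        exact (span_image C.subtype).trans (by rw [hspan, map_subtype_top])
    _ ≤ finrank (ZMod p) (ModN C p) := Finset.card_image_le.trans (by simp)

lemma codeRank_le_finrank_torsionCode : codeRank C ≤ finrank (ZMod p) (torsionCode C) := by
  have hcard : Nat.card (ModN C p) = Nat.card (torsionCode C) :=
    (ModN.natCard_eq_natCard_ker p).trans natCard_torsionCode.symm
  rw [natCard_eq_pow_finrank (K := ZMod p) (V := ModN C p),
    natCard_eq_pow_finrank (K := ZMod p) (V := torsionCode C), Nat.card_zmod] at hcard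
  exact (codeRank_le_finrank_modN C).trans_eq
    (Nat.pow_right_injective (Fact.out : p.Prime).two_le hcard)

lemma minLee_le_pow_mul_Phi (hC : 1 ≤ codeRank C) :
    minLee C ≤ p ^ s * Phi n (codeRank C) p := by
  obtain ⟨D, hDC, hD⟩ := Submodule.exists_le_finrank_eq (codeRank_le_finrank_torsionCode C)
  have hD0 : D ≠ ⊥ := by
    rintro rfl
    rw [finrank_bot] at hD
    omega
  calc minLee C ≤ p ^ s * minLee D := minLee_le_pow_mul_minLee hDC hD0
    _ ≤ p ^ s * Phi n (codeRank C) p := Nat.mul_le_mul_left _ (hD ▸ minLee_le_Phi D)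

end CodeRank

theorem phiR_le_pow_mul_phi_general (p t n K : ℕ) (hp : p.Prime) (ht : 1 ≤ t)
    (hK : 1 ≤ K) :
    PhiR n K (p ^ t) ≤ p ^ (t - 1) * Phi n K p := by
  have := Fact.mk hp
  obtain ⟨s, rfl⟩ : ∃ s, t = s + 1 := ⟨t - 1, by omega⟩
  refine csSup_le' ?_
  rintro _ ⟨C, rfl, rfl⟩
  exact minLee_le_pow_mul_Phi C hK

theorem phiR_le_pow_mul_phi (p t n K : ℕ) (hp : p.Prime) (ht : 1 ≤ t)
    (hK : 1 ≤ K) (hKn : K ≤ n) :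
    PhiR n K (p ^ t) ≤ p ^ (t - 1) * Phi n K p :=
  phiR_le_pow_mul_phi_general p t n K hp ht hK
end

section
/- Let t ≥ 1 and let n, K be integers with K ≥ 2 and n > K+1. Then Φ(n,K,2^t) ≤ 2^{t−1}·(n−K); that is, every rank-K linear code of length n over ℤ_{2^t} has minimum Lee distance at most 2^{t−1}·(n−K). -/
/-!
Every coordinate has Lee weight at most `2 ^ (t - 1)`, so it suffices to find a nonzero codeword
of Hamming weight at most `n - K`. By Nakayama's lemma `C` is generated by lifts of a basis of the
`𝔽₂`-space `C / 2C`, so the `2`-torsion of `C`, which has as many elements as `C / 2C`, has at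
least `2 ^ K` elements; multiplication by `2 ^ (t - 1)` identifies it with a binary linear code.
Shortening that code on `K - 2` coordinates leaves at least four codewords supported on
`n - K + 2` coordinates, and for three of them the pairwise Hamming distances add up to at most
`2 (n - K + 2)`, so two of them are at distance at most `n - K`.
-/

theorem AddMonoidHom.card_le_card_ker_mul_card {G H : Type*} [AddGroup G] [AddGroup H] [Finite H]
    (f : G →+ H) : Nat.card G ≤ Nat.card f.ker * Nat.card H := by
  rw [← f.ker.card_mul_index, AddSubgroup.index_ker]
  exact Nat.mul_le_mul_left _ (Finite.card_subtype_le _)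

theorem exists_finset_closure_eq_top_pow_card_eq (p : ℕ) [Fact p.Prime] {Q : Type*}
    [AddCommGroup Q] [Module (ZMod p) Q] [Finite Q] :
    ∃ s : Finset Q, AddSubgroup.closure (s : Set Q) = ⊤ ∧ p ^ s.card = Nat.card Q := by
  classical
  have := Fintype.ofFinite Q
  let b := Module.finBasis (ZMod p) Q
  refine ⟨Finset.univ.image b, ?_, ?_⟩
  · rw [← map_eq_top_iff (AddSubgroup.toZModSubmodule p), eq_top_iff, ← b.span_eq]
    refine Submodule.span_le.mpr ?_
    rw [Finset.coe_image, Finset.coe_univ, Set.image_univ]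
    exact AddSubgroup.subset_closure
  · rw [Finset.card_image_of_injective _ b.injective, Finset.card_univ, Fintype.card_fin,
      Nat.card_eq_fintype_card, Module.card_eq_pow_finrank (K := ZMod p), ZMod.card]

theorem Ideal.span_singleton_le_jacobson_bot_of_isNilpotent {R : Type*} [CommRing R] {r : R}
    (hr : IsNilpotent r) : Ideal.span {r} ≤ Ideal.jacobson ⊥ :=
  Ideal.span_le.mpr <| Set.singleton_subset_iff.mpr <| Ideal.mem_jacobson_bot.mpr fun y =>
    ((Commute.all r y).isNilpotent_mul_right hr).isUnit_add_one

section Nakayama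

open Submodule

variable {R M : Type*} [CommRing R] [AddCommGroup M] [Module R M] [Finite M]

theorem exists_finset_span_eq_top_pow_card_eq (p : ℕ) [Fact p.Prime] (hp : IsNilpotent (p : R)) :
    ∃ s : Finset M, span R (s : Set M) = ⊤ ∧
      p ^ s.card = Nat.card (M ⧸ (Ideal.span {(p : R)} • ⊤ : Submodule R M)) := by
  set N : Submodule R M := Ideal.span {(p : R)} • ⊤
  have hQ : ∀ x : M ⧸ N, p • x = 0 := by
    intro x
    obtain ⟨m, rfl⟩ := mkQ_surjective _ x
    rw [mkQ_apply, ← Quotient.mk_smul, ← Nat.cast_smul_eq_nsmul R]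
    exact (Quotient.mk_eq_zero _).mpr (smul_mem_smul (Ideal.mem_span_singleton_self _) mem_top)
  let := AddCommGroup.zmodModule hQ
  have := Finite.of_surjective _ (mkQ_surjective N)
  obtain ⟨s, hs_closure, hs_card⟩ := exists_finset_closure_eq_top_pow_card_eq p (Q := M ⧸ N)
  have hs_span : span R (s : Set (M ⧸ N)) = map N.mkQ ⊤ := by
    rw [Submodule.map_top, range_mkQ, eq_top_iff, ← toAddSubgroup_le, top_toAddSubgroup,
      ← hs_closure]
    exact (AddSubgroup.closure_le _).mpr subset_span
  obtain ⟨t, ht_inj, ht_img, ht_span⟩ :=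
    exists_injOn_mkQ_image_span_eq_of_span_eq_map_mkQ_of_le_jacobson_bot _
      Module.Finite.fg_top (Ideal.span_singleton_le_jacobson_bot_of_isNilpotent hp) hs_span
  refine ⟨(Set.toFinite t).toFinset, by simpa using ht_span, ?_⟩
  rw [← Set.ncard_eq_toFinset_card, ← ht_inj.ncard_image, ht_img, Set.ncard_coe_finset, hs_card]

theorem card_quotient_smul_top_eq_card_ker (r : R) :
    Nat.card (M ⧸ (Ideal.span {r} • ⊤ : Submodule R M)) =
      Nat.card (LinearMap.ker (DistribSMul.toLinearMap R M r)) := by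
  rw [ideal_span_singleton_smul, pointwise_smul_def, Submodule.map_top]
  exact AddSubgroup.index_range (f := (DistribSMul.toLinearMap R M r).toAddMonoidHom)

end Nakayama

section Binary

variable {ι : Type*} [Fintype ι]

theorem hammingDist_add_hammingDist_add_hammingDist_le (s : Finset ι) {a b c : ι → ZMod 2}
    (ha : ∀ i ∉ s, a i = 0) (hb : ∀ i ∉ s, b i = 0) (hc : ∀ i ∉ s, c i = 0) :
    hammingDist a b + hammingDist b c + hammingDist a c ≤ 2 * s.card := by
  classical
  have hcoord : ∀ x y z : ZMod 2,
      (if x ≠ y then 1 else 0) + (if y ≠ z then 1 else 0) + (if x ≠ z then 1 else 0) ≤ 2 :=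
    by decide
  simp only [hammingDist, Finset.card_filter, ← Finset.sum_add_distrib]
  calc _ ≤ ∑ i, if i ∈ s then 2 else 0 := Finset.sum_le_sum fun i _ => by
          by_cases hi : i ∈ s
          · simpa [hi] using hcoord (a i) (b i) (c i)
          · simp [hi, ha i hi, hb i hi, hc i hi]
    _ = 2 * s.card := by
          rw [Finset.sum_ite_mem, Finset.univ_inter, Finset.sum_const, smul_eq_mul, mul_comm]

theorem exists_hammingNorm_le_card_sub_of_two_pow_le_card (B : AddSubgroup (ι → ZMod 2))
    {K : ℕ} (hK : 2 ≤ K) (hKι : K + 2 ≤ Fintype.card ι) (hB : 2 ^ K ≤ Nat.card B) :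
    ∃ x ∈ B, x ≠ 0 ∧ hammingNorm x ≤ Fintype.card ι - K := by
  classical
  obtain ⟨T, -, hT⟩ := Finset.exists_subset_card_eq (s := (Finset.univ : Finset ι))
    (n := K - 2) (by rw [Finset.card_univ]; omega)
  let restrict : B →+ (T → ZMod 2) :=
    (LinearMap.funLeft (ZMod 2) (ZMod 2) (Subtype.val : T → ι)).toAddMonoidHom.comp B.subtype
  have hker : 2 < Nat.card restrict.ker := by
    have hsplit : 2 ^ K = 4 * 2 ^ (K - 2) := by
      rw [show (4 : ℕ) = 2 ^ 2 by norm_num, ← pow_add, Nat.add_sub_cancel' hK]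
    have := hB.trans restrict.card_le_card_ker_mul_card
    rw [Nat.card_fun, Nat.card_eq_fintype_card (α := T), Fintype.card_coe, hT, Nat.card_zmod,
      hsplit] at this
    have := Nat.le_of_mul_le_mul_right this (by positivity)
    omega
  have := Fintype.ofFinite restrict.ker
  rw [Nat.card_eq_fintype_card, Fintype.two_lt_card_iff] at hker
  obtain ⟨a, b, c, hab, hac, hbc⟩ := hker
  have hsupp : ∀ x : restrict.ker, ∀ i ∉ Tᶜ, (x : ι → ZMod 2) i = 0 := fun x i hi =>
    congrFun (restrict.mem_ker.mp x.2) ⟨i, by simpa using hi⟩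
  have hpair : ∀ x y : restrict.ker, x ≠ y →
      hammingDist (x : ι → ZMod 2) y ≤ Fintype.card ι - K →
      ∃ z ∈ B, z ≠ 0 ∧ hammingNorm z ≤ Fintype.card ι - K := fun x y hxy hdist =>
    ⟨(y : ι → ZMod 2) - x, sub_mem y.1.2 x.1.2,
      sub_ne_zero.mpr fun h => hxy (Subtype.ext (Subtype.ext h.symm)),
      by rwa [hammingDist_eq_hammingNorm, neg_add_eq_sub] at hdist⟩
  have hsum := hammingDist_add_hammingDist_add_hammingDist_le Tᶜ (hsupp a) (hsupp b) (hsupp c)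
  rw [Finset.card_compl, hT] at hsum
  rcases le_or_gt (hammingDist (a : ι → ZMod 2) b) (Fintype.card ι - K) with h | h
  · exact hpair a b hab h
  rcases le_or_gt (hammingDist (b : ι → ZMod 2) c) (Fintype.card ι - K) with h' | h'
  · exact hpair b c hbc h'
  rcases le_or_gt (hammingDist (a : ι → ZMod 2) c) (Fintype.card ι - K) with h'' | h''
  · exact hpair a c hac h''
  omega

end Binary

namespace ZMod

variable {t : ℕ}

theorem two_pow_ne_zero : (2 ^ t : ZMod (2 ^ (t + 1))) ≠ 0 := by
  have : ((2 ^ t : ℕ) : ZMod (2 ^ (t + 1))) ≠ 0 := by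
    rw [Ne, natCast_eq_zero_iff, Nat.pow_dvd_pow_iff_le_right (by norm_num)]
    omega
  exact_mod_cast this

theorem two_pow_add_two_pow : (2 ^ t : ZMod (2 ^ (t + 1))) + 2 ^ t = 0 := by
  rw [← two_mul, ← pow_succ']
  exact_mod_cast natCast_self (2 ^ (t + 1))

theorem eq_zero_or_eq_two_pow_of_add_self_eq_zero {a : ZMod (2 ^ (t + 1))} (ha : a + a = 0) :
    a = 0 ∨ a = 2 ^ t := by
  obtain ⟨k, hk⟩ : 2 ^ t * 2 ∣ a.val + a.val := by
    rw [← pow_succ, ← natCast_eq_zero_iff, Nat.cast_add, natCast_zmod_val, ha]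
  have hlt : a.val < 2 ^ t * 2 := pow_succ 2 t ▸ a.val_lt
  have hk2 : k < 2 := by
    by_contra! h
    nlinarith [Nat.one_le_two_pow (n := t)]
  interval_cases k
  · exact Or.inl ((val_eq_zero a).mp (by omega))
  · right
    rw [← natCast_zmod_val a, show a.val = 2 ^ t by omega]
    push_cast
    rfl

def twoPowMulHom (t : ℕ) : ZMod 2 →+ ZMod (2 ^ (t + 1)) :=
  lift 2 ⟨zmultiplesHom _ (2 ^ t), by simpa [two_mul] using two_pow_add_two_pow⟩

theorem twoPowMulHom_one : twoPowMulHom t 1 = 2 ^ t := by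
  rw [← Int.cast_one, twoPowMulHom, lift_coe]
  exact one_zsmul _

theorem twoPowMulHom_injective : Function.Injective (twoPowMulHom t) := by
  refine (injective_iff_map_eq_zero _).mpr fun a ha => ?_
  fin_cases a
  · rfl
  · exact absurd (twoPowMulHom_one.symm.trans ha) two_pow_ne_zero

theorem exists_twoPowMulHom_eq {a : ZMod (2 ^ (t + 1))} (ha : a + a = 0) :
    ∃ b, twoPowMulHom t b = a := by
  rcases eq_zero_or_eq_two_pow_of_add_self_eq_zero ha with rfl | rfl
  · exact ⟨0, map_zero _⟩
  · exact ⟨1, twoPowMulHom_one⟩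

end ZMod

theorem leeWt_le_half {q : ℕ} (a : ZMod q) : leeWt a ≤ q / 2 := by
  unfold leeWt
  omega

theorem leeWtVec_le_mul_hammingNorm {q n : ℕ} (x : Fin n → ZMod q) :
    leeWtVec x ≤ q / 2 * hammingNorm x := by
  calc leeWtVec x ≤ ∑ i, if x i ≠ 0 then q / 2 else 0 := by
        refine Finset.sum_le_sum fun i _ => ?_
        split_ifs with h
        · exact leeWt_le_half _
        · simp [not_not.mp h, leeWt]
    _ = q / 2 * hammingNorm x := by
        rw [← Finset.sum_filter, Finset.sum_const, smul_eq_mul, mul_comm, hammingNorm]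

theorem pow_codeRank_le_card_ker {q n : ℕ} [NeZero q] (p : ℕ) [Fact p.Prime]
    (hp : IsNilpotent (p : ZMod q)) (C : Submodule (ZMod q) (Fin n → ZMod q)) :
    p ^ codeRank C ≤
      Nat.card (LinearMap.ker (DistribSMul.toLinearMap (ZMod q) C (p : ZMod q))) := by
  obtain ⟨s, hs_span, hs_card⟩ := exists_finset_span_eq_top_pow_card_eq (M := C) p hp
  have hrank : codeRank C ≤ s.card := by
    refine Nat.sInf_le ⟨s.map (Function.Embedding.subtype _), Finset.card_map _, ?_⟩
    rw [Finset.coe_map, Function.Embedding.coe_subtype, ← C.coe_subtype, Submodule.span_image,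
      hs_span, Submodule.map_top, Submodule.range_subtype]
  calc p ^ codeRank C ≤ p ^ s.card := Nat.pow_le_pow_right (Fact.out : p.Prime).pos hrank
    _ = _ := hs_card.trans (card_quotient_smul_top_eq_card_ker _)

theorem card_ker_two_smul_le_card_comap_twoPowMulHom {t : ℕ} {ι : Type*} [Finite ι]
    (C : Submodule (ZMod (2 ^ (t + 1))) (ι → ZMod (2 ^ (t + 1)))) :
    Nat.card (LinearMap.ker
        (DistribSMul.toLinearMap (ZMod (2 ^ (t + 1))) C (2 : ZMod (2 ^ (t + 1))))) ≤
      Nat.card (C.toAddSubgroup.comap ((ZMod.twoPowMulHom t).compLeft ι)) := by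
  have hlift : ∀ v : LinearMap.ker
      (DistribSMul.toLinearMap (ZMod (2 ^ (t + 1))) C (2 : ZMod (2 ^ (t + 1)))),
      ∃ x : ι → ZMod 2, (ZMod.twoPowMulHom t).compLeft ι x = v := by
    intro v
    have hv : (2 : ZMod (2 ^ (t + 1))) • (v : C) = 0 := LinearMap.mem_ker.mp v.2
    rw [two_smul] at hv
    choose x hx using fun i => ZMod.exists_twoPowMulHom_eq (congrFun (congrArg Subtype.val hv) i)
    exact ⟨x, funext hx⟩
  choose x hx using hlift
  refine Nat.card_le_card_of_injective (fun v => ⟨x v, ?_⟩) fun v w hvw => ?_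
  · simp only [AddSubgroup.mem_comap, Submodule.mem_toAddSubgroup, hx]
    exact (v : C).2
  · have := congrArg ((ZMod.twoPowMulHom t).compLeft ι) (congrArg Subtype.val hvw)
    rw [hx, hx] at this
    exact Subtype.ext (Subtype.ext this)

theorem exists_hammingNorm_le_sub_codeRank {t n : ℕ}
    (C : Submodule (ZMod (2 ^ (t + 1))) (Fin n → ZMod (2 ^ (t + 1))))
    (hK : 2 ≤ codeRank C) (hn : codeRank C + 1 < n) :
    ∃ x ∈ C, x ≠ 0 ∧ hammingNorm x ≤ n - codeRank C := by
  have := Fact.mk Nat.prime_two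
  have h2 : IsNilpotent ((2 : ℕ) : ZMod (2 ^ (t + 1))) :=
    ⟨t + 1, by exact_mod_cast ZMod.natCast_self (2 ^ (t + 1))⟩
  have hsocle := pow_codeRank_le_card_ker 2 h2 C
  rw [Nat.cast_ofNat] at hsocle
  let embed := (ZMod.twoPowMulHom t).compLeft (Fin n)
  obtain ⟨x, hxB, hx0, hxwt⟩ :=
    exists_hammingNorm_le_card_sub_of_two_pow_le_card (C.toAddSubgroup.comap embed) hK
      (by rw [Fintype.card_fin]; omega)
      (hsocle.trans (card_ker_two_smul_le_card_comap_twoPowMulHom C))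
  refine ⟨embed x, hxB, (map_ne_zero_iff _ ZMod.twoPowMulHom_injective.comp_left).mpr hx0, ?_⟩
  change hammingNorm (fun i => ZMod.twoPowMulHom t (x i)) ≤ _
  rw [hammingNorm_comp _ (fun _ => ZMod.twoPowMulHom_injective) (fun _ => map_zero _)]
  rwa [Fintype.card_fin] at hxwt

theorem phiR_two_pow_bound (t n K : ℕ) (ht : 1 ≤ t) (hK : 2 ≤ K) (hn : K + 1 < n) :
    PhiR n K (2 ^ t) ≤ 2 ^ (t - 1) * (n - K) := by
  obtain ⟨s, rfl⟩ := Nat.exists_eq_add_of_le' ht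
  refine csSup_le' ?_
  rintro _ ⟨C, rfl, rfl⟩
  obtain ⟨x, hxC, hx0, hxwt⟩ := exists_hammingNorm_le_sub_codeRank C hK hn
  calc minLee C ≤ leeWtVec x := Nat.sInf_le ⟨x, hxC, hx0, rfl⟩
    _ ≤ 2 ^ (s + 1) / 2 * hammingNorm x := leeWtVec_le_mul_hammingNorm x
    _ ≤ 2 ^ (s + 1 - 1) * (n - codeRank C) := by
      rw [Nat.add_sub_cancel, show 2 ^ (s + 1) / 2 = 2 ^ s by omega]
      exact Nat.mul_le_mul_left _ hxwt
end
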